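/- arXiv:1707.01212 — 7 statements merged into one kernel-verified Lean document; each statement's English description precedes it below -/
import Mathlib

section
/- Let L ⊆ {1,…,n} and j ∉ L. If (μ − Kζ^L)_j ≤ 0 then ζ^{L∪{j}} = ζ^L; in particular ζ^{L∪{j}}_j = 0 and f(L∪{j}) = f(L). Consequently, if ζ^{L∪{j}}_j > 0 then (μ − Kζ^L)_j > 0. (Lemma 4.4) -/
open Finset Matrix

noncomputable section

/-- The objective `l(w) = ⟨μ, w⟩ - (1/2) ⟨w, K w⟩`. -/
def obj {n : ℕ} (K : Matrix (Fin n) (Fin n) ℝ) (μ : Fin n → ℝ) (w : Fin n → ℝ) : ℝ :=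
  μ ⬝ᵥ w - (1 / 2) * (w ⬝ᵥ (K *ᵥ w))

/-- The feasible set `Ω_L = {w : w ≥ 0, w_j = 0 for j ∉ L}`. -/
def feas {n : ℕ} (L : Finset (Fin n)) : Set (Fin n → ℝ) :=
  {w | (∀ j, 0 ≤ w j) ∧ ∀ j ∉ L, w j = 0}

/-!
The objective `l` is a concave quadratic with `l (z + d) = l z + ⟨μ - K z, d⟩ - ⟨d, K d⟩ / 2`.
Hence a maximizer `z` of `l` over a convex set satisfies the first-order condition
`⟨μ - K z, w - z⟩ ≤ 0` on that set, and, `K` being positive definite, a point satisfying it is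
the only maximizer. The condition for `ζ L` on `Ω_L` persists on `Ω_{L ∪ {j}}` when
`(μ - K ζ L)_j ≤ 0`, because `w - ζ L` differs from a direction inside `Ω_L` only by `w_j e_j`,
which contributes `(μ - K ζ L)_j w_j ≤ 0`. So `ζ L` is the maximizer on `Ω_{L ∪ {j}}`.
-/

open Filter Topology

lemma nonpos_of_forall_le_mul {g c : ℝ} (h : ∀ t ∈ Set.Ioc (0 : ℝ) 1, g ≤ t * c) : g ≤ 0 := by
  have hlim : Tendsto (fun t => t * c) (𝓝[>] 0) (𝓝 0) :=
    ((continuous_mul_const c).tendsto' 0 0 (zero_mul c)).mono_left nhdsWithin_le_nhds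
  exact ge_of_tendsto hlim (Filter.mem_of_superset (Ioc_mem_nhdsGT one_pos) h)

variable {n : ℕ} {K : Matrix (Fin n) (Fin n) ℝ} {μ z w : Fin n → ℝ}

lemma obj_add (hsymm : K.IsSymm) (μ z d : Fin n → ℝ) :
    obj K μ (z + d) = obj K μ z + (μ - K *ᵥ z) ⬝ᵥ d - 1 / 2 * (d ⬝ᵥ (K *ᵥ d)) := by
  have hzd : z ⬝ᵥ (K *ᵥ d) = d ⬝ᵥ (K *ᵥ z) := by
    rw [dotProduct_mulVec, ← mulVec_transpose, hsymm.eq, dotProduct_comm]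
  simp only [obj, mulVec_add, dotProduct_add, add_dotProduct, sub_dotProduct, hzd,
    dotProduct_comm (K *ᵥ z) d]
  ring

lemma grad_dotProduct_sub_nonpos_of_isMaxOn (hsymm : K.IsSymm) {S : Set (Fin n → ℝ)}
    (hS : Convex ℝ S) (hz : z ∈ S) (hmax : IsMaxOn (obj K μ) S z) (hw : w ∈ S) :
    (μ - K *ᵥ z) ⬝ᵥ (w - z) ≤ 0 := by
  set d := w - z
  refine nonpos_of_forall_le_mul (c := d ⬝ᵥ (K *ᵥ d) / 2) fun t ht => ?_
  have hstep : obj K μ (z + t • d) ≤ obj K μ z :=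
    hmax (hS.add_smul_sub_mem hz hw ⟨ht.1.le, ht.2⟩)
  simp only [obj_add hsymm, mulVec_smul, dotProduct_smul, smul_dotProduct, smul_eq_mul] at hstep
  nlinarith [ht.1]

lemma obj_lt_of_grad_dotProduct_sub_nonpos (hsymm : K.IsSymm) (hpd : K.PosDef)
    (h : (μ - K *ᵥ z) ⬝ᵥ (w - z) ≤ 0) (hne : w ≠ z) : obj K μ w < obj K μ z := by
  have hq : 0 < (w - z) ⬝ᵥ (K *ᵥ (w - z)) := by
    simpa using hpd.dotProduct_mulVec_pos (sub_ne_zero.2 hne)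
  have hexp := obj_add hsymm μ z (w - z)
  rw [add_sub_cancel] at hexp
  linarith

lemma eq_of_isMaxOn_of_grad_dotProduct_sub_nonpos (hsymm : K.IsSymm) (hpd : K.PosDef)
    {S : Set (Fin n → ℝ)} (hfo : ∀ v ∈ S, (μ - K *ᵥ z) ⬝ᵥ (v - z) ≤ 0) (hz : z ∈ S)
    (hw : w ∈ S) (hmax : IsMaxOn (obj K μ) S w) : w = z := by
  by_contra hne
  exact (obj_lt_of_grad_dotProduct_sub_nonpos hsymm hpd (hfo w hw) hne).not_ge (hmax hz)

lemma convex_feas (L : Finset (Fin n)) : Convex ℝ (feas L) := by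
  intro x hx y hy a b ha hb _
  refine ⟨fun i => ?_, fun i hi => ?_⟩
  · simp only [Pi.add_apply, Pi.smul_apply, smul_eq_mul]
    exact add_nonneg (mul_nonneg ha (hx.1 i)) (mul_nonneg hb (hy.1 i))
  · simp [hx.2 i hi, hy.2 i hi]

lemma feas_mono {L M : Finset (Fin n)} (h : L ⊆ M) : feas L ⊆ feas M :=
  fun _ hw => ⟨hw.1, fun i hi => hw.2 i (fun hiL => hi (h hiL))⟩

lemma update_zero_mem_feas {L : Finset (Fin n)} {j : Fin n} (hw : w ∈ feas (insert j L)) :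
    Function.update w j 0 ∈ feas L := by
  refine ⟨fun i => ?_, fun i hi => ?_⟩ <;> rw [Function.update_apply] <;> split_ifs with hij
  · exact le_rfl
  · exact hw.1 i
  · rfl
  · exact hw.2 i (by simp [hij, hi])

lemma dotProduct_sub_nonpos_on_feas_insert {g z : Fin n → ℝ} {L : Finset (Fin n)} {j : Fin n}
    (hL : ∀ v ∈ feas L, g ⬝ᵥ (v - z) ≤ 0) (hgj : g j ≤ 0) :
    ∀ v ∈ feas (insert j L), g ⬝ᵥ (v - z) ≤ 0 := by
  intro v hv
  have hsplit : v - z = (Function.update v j 0 - z) + Pi.single j (v j) := by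
    rw [Pi.update_eq_sub_add_single, Pi.single_zero]
    abel
  rw [hsplit, dotProduct_add, dotProduct_single]
  exact add_nonpos (hL _ (update_zero_mem_feas hv)) (mul_nonpos_of_nonpos_of_nonneg hgj (hv.1 j))

theorem nonpos_gradient_no_change_general (n : ℕ)
    (K : Matrix (Fin n) (Fin n) ℝ) (hsymm : K.IsSymm) (hpd : K.PosDef)
    (μ : Fin n → ℝ)
    (ζ : Finset (Fin n) → Fin n → ℝ)
    (hζ : ∀ L : Finset (Fin n),
      ζ L ∈ feas L ∧ ∀ w ∈ feas L, obj K μ w ≤ obj K μ (ζ L))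
    (f : Finset (Fin n) → ℝ) (hf : ∀ L : Finset (Fin n), f L = obj K μ (ζ L))
    (L : Finset (Fin n)) (j : Fin n) (hj : j ∉ L) :
    (μ j - (K *ᵥ ζ L) j ≤ 0 →
      ζ (insert j L) = ζ L ∧ ζ (insert j L) j = 0 ∧ f (insert j L) = f L) ∧
    (0 < ζ (insert j L) j → 0 < μ j - (K *ᵥ ζ L) j) := by
  have hmax (M : Finset (Fin n)) : IsMaxOn (obj K μ) (feas M) (ζ M) := isMaxOn_iff.2 (hζ M).2
  have hzj : ζ L j = 0 := (hζ L).1.2 j hj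
  have hunchanged (hgrad : μ j - (K *ᵥ ζ L) j ≤ 0) : ζ (insert j L) = ζ L :=
    have hfo := dotProduct_sub_nonpos_on_feas_insert (fun _ hv =>
      grad_dotProduct_sub_nonpos_of_isMaxOn hsymm (convex_feas L) (hζ L).1 (hmax L) hv) hgrad
    eq_of_isMaxOn_of_grad_dotProduct_sub_nonpos hsymm hpd hfo
      (feas_mono (subset_insert j L) (hζ L).1) (hζ _).1 (hmax _)
  refine ⟨fun hgrad => ?_, fun hpos => ?_⟩
  · have h := hunchanged hgrad
    exact ⟨h, h ▸ hzj, by rw [hf, hf, h]⟩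
  · exact lt_of_not_ge fun hle => hpos.ne' (by rw [hunchanged hle, hzj])

/-- Lemma 4.4: if the gradient coordinate at `j ∉ L` is nonpositive then adding `j` changes
nothing; consequently a strictly positive new weight forces a strictly positive gradient. -/
theorem nonpos_gradient_no_change (n : ℕ) (hn : 1 ≤ n)
    (K : Matrix (Fin n) (Fin n) ℝ) (hsymm : K.IsSymm) (hpd : K.PosDef)
    (μ : Fin n → ℝ)
    (ζ : Finset (Fin n) → Fin n → ℝ)
    (hζ : ∀ L : Finset (Fin n),
      ζ L ∈ feas L ∧ ∀ w ∈ feas L, obj K μ w ≤ obj K μ (ζ L))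
    (f : Finset (Fin n) → ℝ) (hf : ∀ L : Finset (Fin n), f L = obj K μ (ζ L))
    (L : Finset (Fin n)) (j : Fin n) (hj : j ∉ L) :
    (μ j - (K *ᵥ ζ L) j ≤ 0 →
      ζ (insert j L) = ζ L ∧ ζ (insert j L) j = 0 ∧ f (insert j L) = f L) ∧
    (0 < ζ (insert j L) j → 0 < μ j - (K *ᵥ ζ L) j) :=
  nonpos_gradient_no_change_general n K hsymm hpd μ ζ hζ f hf L j hj
end
end

section
/- For any disjoint subsets L, S ⊆ {1,…,n}: 0 ≤ f(L∪S) − f(L) ≤ (1/(2c)) · Σ_{j ∈ S} (max{(μ − Kζ^L)_j, 0})². -/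
open Finset Matrix

noncomputable section

lemma obj_expand {n : ℕ} (K : Matrix (Fin n) (Fin n) ℝ) (hsymm : K.IsSymm)
    (μ z d : Fin n → ℝ) :
    obj K μ (z + d) = obj K μ z + ((μ - K *ᵥ z) ⬝ᵥ d) - (1 / 2) * (d ⬝ᵥ (K *ᵥ d)) := by
  have hsw : ∀ x y : Fin n → ℝ, x ⬝ᵥ (K *ᵥ y) = y ⬝ᵥ (K *ᵥ x) := by
    intro x y
    rw [dotProduct_mulVec, ← Matrix.mulVec_transpose, hsymm.eq, dotProduct_comm]
  simp only [obj, mulVec_add, dotProduct_add, add_dotProduct, sub_dotProduct]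
  rw [hsw z d, dotProduct_comm (K *ᵥ z) d]
  ring

/-- For disjoint `L, S`:
`0 ≤ f(L∪S) - f(L) ≤ (1/(2c)) ∑_{j ∈ S} (max{∇l_j(ζ^L), 0})²`. -/
theorem gain_upper_bound (n : ℕ) (hn : 1 ≤ n)
    (K : Matrix (Fin n) (Fin n) ℝ) (hsymm : K.IsSymm) (hpd : K.PosDef)
    (μ : Fin n → ℝ)
    (ζ : Finset (Fin n) → Fin n → ℝ)
    (hζ : ∀ L : Finset (Fin n),
      ζ L ∈ feas L ∧ ∀ w ∈ feas L, obj K μ w ≤ obj K μ (ζ L))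
    (f : Finset (Fin n) → ℝ) (hf : ∀ L : Finset (Fin n), f L = obj K μ (ζ L))
    (c : ℝ) (hc : 0 < c)
    (hcK : ∀ x : Fin n → ℝ, c * (∑ j, (x j) ^ 2) ≤ x ⬝ᵥ (K *ᵥ x))
    (L S : Finset (Fin n)) (hdisj : Disjoint L S) :
    0 ≤ f (L ∪ S) - f L ∧
      f (L ∪ S) - f L ≤ (1 / (2 * c)) * ∑ j ∈ S, (max (μ j - (K *ᵥ ζ L) j) 0) ^ 2 := by
  set z := ζ L with hz
  set w := ζ (L ∪ S) with hw
  obtain ⟨⟨hz0, hzL⟩, hzopt⟩ := hζ L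
  obtain ⟨⟨hw0, hwLS⟩, hwopt⟩ := hζ (L ∪ S)
  set g : Fin n → ℝ := μ - K *ᵥ z with hg
  set d : Fin n → ℝ := w - z with hd
  set h : Fin n → ℝ := fun j => if j ∈ L then d j else 0 with hhdef
  -- z is feasible for L ∪ S
  have hzfeasLS : z ∈ feas (L ∪ S) := by
    refine ⟨hz0, fun j hj => hzL j (fun hjL => hj (Finset.mem_union_left _ hjL))⟩
  have hlow : 0 ≤ f (L ∪ S) - f L := by
    rw [hf, hf]
    have := hwopt z hzfeasLS
    linarith
  refine ⟨hlow, ?_⟩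
  -- first-order optimality in direction h
  have hkey : ∀ t : ℝ, 0 ≤ t → t ≤ 1 →
      t * (g ⬝ᵥ h) - t ^ 2 / 2 * (h ⬝ᵥ (K *ᵥ h)) ≤ 0 := by
    intro t ht0 ht1
    have hfeas : z + t • h ∈ feas L := by
      constructor
      · intro j
        by_cases hjL : j ∈ L
        · have : (z + t • h) j = (1 - t) * z j + t * w j := by
            simp only [Pi.add_apply, Pi.smul_apply, smul_eq_mul, hhdef, if_pos hjL, hd,
              Pi.sub_apply]
            ring
          rw [this]
          have := hz0 j
          have := hw0 j
          nlinarith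
        · simp only [Pi.add_apply, Pi.smul_apply, smul_eq_mul, hhdef, if_neg hjL]
          simpa using hz0 j
      · intro j hjL
        simp only [Pi.add_apply, Pi.smul_apply, smul_eq_mul, hhdef, if_neg hjL]
        simpa using hzL j hjL
    have hopt := hzopt _ hfeas
    rw [obj_expand K hsymm μ z (t • h)] at hopt
    have e1 : (μ - K *ᵥ z) ⬝ᵥ (t • h) = t * (g ⬝ᵥ h) := by
      rw [dotProduct_smul]; simp [hg]
    have e2 : (t • h) ⬝ᵥ (K *ᵥ (t • h)) = t ^ 2 * (h ⬝ᵥ (K *ᵥ h)) := by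
      rw [mulVec_smul, dotProduct_smul, smul_dotProduct]
      simp; ring
    rw [e1, e2] at hopt
    linarith
  have hq0 : 0 ≤ h ⬝ᵥ (K *ᵥ h) := by
    have := hcK h
    have : 0 ≤ c * (∑ j, (h j) ^ 2) :=
      mul_nonneg hc.le (Finset.sum_nonneg fun j _ => sq_nonneg _)
    linarith [hcK h]
  have hgh : g ⬝ᵥ h ≤ 0 := by
    by_contra hpos
    push_neg at hpos
    set q := h ⬝ᵥ (K *ᵥ h) with hqdef
    have h1 := hkey 1 zero_le_one le_rfl
    have hqpos : 0 < q := by nlinarith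
    have ht := hkey (g ⬝ᵥ h / q) (by positivity) (by
      rw [div_le_one hqpos]; nlinarith)
    rw [div_pow] at ht
    have : (g ⬝ᵥ h) ^ 2 / q ≤ (g ⬝ᵥ h) ^ 2 / q / 2 := by
      have e : g ⬝ᵥ h / q * (g ⬝ᵥ h) = (g ⬝ᵥ h) ^ 2 / q := by ring
      have e2 : (g ⬝ᵥ h) ^ 2 / q ^ 2 / 2 * q = (g ⬝ᵥ h) ^ 2 / q / 2 := by
        field_simp
      rw [e, e2] at ht
      linarith
    have : 0 < (g ⬝ᵥ h) ^ 2 / q := by positivity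
    linarith
  -- decompose g ⬝ᵥ d
  have hdzero : ∀ j, j ∉ L ∪ S → d j = 0 := by
    intro j hj
    show ζ (L ∪ S) j - ζ L j = 0
    rw [hwLS j hj, hzL j (fun hjL => hj (Finset.mem_union_left _ hjL))]
    ring
  have hgd : g ⬝ᵥ d = (∑ j ∈ L, g j * d j) + ∑ j ∈ S, g j * d j := by
    rw [dotProduct]
    rw [← Finset.sum_subset (Finset.subset_univ (L ∪ S))
      (fun j _ hj => by rw [hdzero j hj, mul_zero])]
    exact Finset.sum_union hdisj
  have hghL : g ⬝ᵥ h = ∑ j ∈ L, g j * d j := by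
    rw [dotProduct]
    rw [← Finset.sum_subset (Finset.subset_univ L)
      (fun j _ hj => by simp [hhdef, if_neg hj])]
    exact Finset.sum_congr rfl fun j hj => by simp [hhdef, if_pos hj]
  -- on S, d j = w j and z j = 0
  have hdS : ∀ j ∈ S, d j = w j := by
    intro j hj
    have hjL : j ∉ L := fun hjL => (Finset.disjoint_left.mp hdisj hjL hj)
    show ζ (L ∪ S) j - ζ L j = ζ (L ∪ S) j
    rw [hzL j hjL]
    ring
  -- quadratic lower bound on d ⬝ᵥ K d
  have hdKd : c * (∑ j ∈ S, (w j) ^ 2) ≤ d ⬝ᵥ (K *ᵥ d) := by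
    refine le_trans ?_ (hcK d)
    have hsub : ∑ j ∈ S, (w j) ^ 2 ≤ ∑ j, (d j) ^ 2 := by
      rw [show ∑ j ∈ S, (w j) ^ 2 = ∑ j ∈ S, (d j) ^ 2 from
        Finset.sum_congr rfl fun j hj => by rw [hdS j hj]]
      exact Finset.sum_le_sum_of_subset_of_nonneg (Finset.subset_univ S)
        (fun j _ _ => sq_nonneg _)
    nlinarith
  -- main bound
  have hpt : ∀ j ∈ S, g j * d j ≤
      (1 / (2 * c)) * (max (μ j - (K *ᵥ z) j) 0) ^ 2 + (c / 2) * (w j) ^ 2 := by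
    intro j hj
    have hdj := hdS j hj
    have hwj : 0 ≤ w j := hw0 j
    have hgj : g j = μ j - (K *ᵥ z) j := rfl
    set a := μ j - (K *ᵥ z) j with ha
    rw [hdj, hgj]
    rcases le_or_gt a 0 with hle | hlt
    · rw [max_eq_right hle]
      nlinarith [mul_nonneg (neg_nonneg.mpr hle) hwj]
    · rw [max_eq_left hlt.le]
      have key : 2 * c * (a * w j) ≤ a ^ 2 + c ^ 2 * (w j) ^ 2 := by
        nlinarith [sq_nonneg (a - c * w j)]
      have h2c : (0:ℝ) < 2 * c := by linarith
      calc a * w j = (2 * c * (a * w j)) / (2 * c) := by field_simp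
        _ ≤ (a ^ 2 + c ^ 2 * (w j) ^ 2) / (2 * c) := by gcongr
        _ = 1 / (2 * c) * a ^ 2 + c / 2 * (w j) ^ 2 := by field_simp
  have hsum : ∑ j ∈ S, g j * d j ≤
      (1 / (2 * c)) * (∑ j ∈ S, (max (μ j - (K *ᵥ z) j) 0) ^ 2) +
        (c / 2) * ∑ j ∈ S, (w j) ^ 2 := by
    calc ∑ j ∈ S, g j * d j
        ≤ ∑ j ∈ S, ((1 / (2 * c)) * (max (μ j - (K *ᵥ z) j) 0) ^ 2 + (c / 2) * (w j) ^ 2) :=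
          Finset.sum_le_sum hpt
      _ = _ := by rw [Finset.sum_add_distrib, Finset.mul_sum, Finset.mul_sum]
  have hexp : obj K μ w = obj K μ z + (g ⬝ᵥ d) - (1 / 2) * (d ⬝ᵥ (K *ᵥ d)) := by
    have hwd : w = z + d := by simp [hd]
    rw [hwd, obj_expand K hsymm μ z d]
  have hgd2 : g ⬝ᵥ d ≤ ∑ j ∈ S, g j * d j := by
    have := hghL ▸ hgh
    rw [hgd]
    linarith
  have hgoal : obj K μ w - obj K μ z ≤
      (1 / (2 * c)) * ∑ j ∈ S, (max (μ j - (K *ᵥ z) j) 0) ^ 2 := by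
    rw [hexp]
    linarith
  rw [hf, hf]
  exact hgoal
end
end

section
/- For any disjoint subsets L, S ⊆ {1,…,n}: Σ_{j ∈ S} (f(L∪{j}) − f(L)) ≥ (1/(2C̃₁)) · Σ_{j ∈ S} (max{(μ − Kζ^L)_j, 0})², where C̃₁ = max_{1≤j≤n} K_{jj}. -/
/-!
For each `j`, move from `ζ^L` along the coordinate direction `e_j` by the step
`t = max(g_j, 0) / K_jj`, where `g = μ - K ζ^L`. The point stays in `Ω_{L ∪ {j}}`, and along that
line `l` is the concave parabola `l(ζ^L) + t g_j - t² K_jj / 2`, so this step gains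
`max(g_j, 0)² / (2 K_jj) ≥ max(g_j, 0)² / (2 C̃₁)`. Summing over `j ∈ S` gives the bound.
-/

open Finset Matrix

noncomputable section

lemma Matrix.IsSymm.dotProduct_col {m R : Type*} [Fintype m] [CommSemiring R]
    {K : Matrix m m R} (hK : K.IsSymm) (w : m → R) (j : m) : w ⬝ᵥ K.col j = (K *ᵥ w) j := by
  rw [← vecMul_transpose, hK.eq]
  rfl

lemma mul_max_sub_sq_div {a : ℝ} (ha : 0 < a) (g : ℝ) :
    max g 0 / a * g - (max g 0 / a) ^ 2 / 2 * a = max g 0 ^ 2 / (2 * a) := by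
  have hmg : max g 0 * g = max g 0 ^ 2 := by
    rcases le_total g 0 with hg | hg
    · simp [max_eq_right hg]
    · rw [max_eq_left hg, sq]
  field_simp
  linear_combination 2 * hmg

variable {n : ℕ}

lemma obj_add_smul_single {K : Matrix (Fin n) (Fin n) ℝ} (hK : K.IsSymm)
    (μ w : Fin n → ℝ) (j : Fin n) (t : ℝ) :
    obj K μ (w + t • Pi.single j 1)
      = obj K μ w + t * (μ j - (K *ᵥ w) j) - t ^ 2 / 2 * K j j := by
  simp only [obj, mulVec_add, mulVec_smul, dotProduct_add, add_dotProduct, dotProduct_smul,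
    smul_dotProduct, hK.dotProduct_col, single_dotProduct, dotProduct_single,
    mulVec_single_one, col_apply, Pi.add_apply, Pi.smul_apply, smul_eq_mul]
  ring

lemma add_smul_single_mem_feas_insert {L : Finset (Fin n)} {w : Fin n → ℝ} (hw : w ∈ feas L)
    {t : ℝ} (ht : 0 ≤ t) (j : Fin n) : w + t • Pi.single j 1 ∈ feas (insert j L) := by
  refine ⟨fun i => add_nonneg (hw.1 i) ?_, fun i hi => ?_⟩
  · rcases eq_or_ne i j with rfl | hij
    · simpa using ht
    · simp [hij]
  · rw [mem_insert, not_or] at hi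
    simp [hw.2 i hi.2, hi.1]

lemma obj_add_sq_max_div_le {K : Matrix (Fin n) (Fin n) ℝ} (hK : K.PosDef) {μ : Fin n → ℝ}
    {L : Finset (Fin n)} {j : Fin n} {w z : Fin n → ℝ} (hw : w ∈ feas L)
    (hz : ∀ v ∈ feas (insert j L), obj K μ v ≤ obj K μ z) :
    obj K μ w + max (μ j - (K *ᵥ w) j) 0 ^ 2 / (2 * K j j) ≤ obj K μ z := by
  have hKjj : 0 < K j j := hK.diag_pos
  set t := max (μ j - (K *ᵥ w) j) 0 / K j j
  have ht : 0 ≤ t := div_nonneg (le_max_right _ _) hKjj.le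
  have hle := hz _ (add_smul_single_mem_feas_insert hw ht j)
  rwa [obj_add_smul_single (isHermitian_iff_isSymm.mp hK.isHermitian), add_sub_assoc,
    mul_max_sub_sq_div hKjj] at hle

theorem singleton_gain_lower_bound_general (n : ℕ)
    (K : Matrix (Fin n) (Fin n) ℝ) (hpd : K.PosDef)
    (μ : Fin n → ℝ)
    (ζ : Finset (Fin n) → Fin n → ℝ)
    (hζ : ∀ L : Finset (Fin n),
      ζ L ∈ feas L ∧ ∀ w ∈ feas L, obj K μ w ≤ obj K μ (ζ L))
    (f : Finset (Fin n) → ℝ) (hf : ∀ L : Finset (Fin n), f L = obj K μ (ζ L))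
    (C₁ : ℝ) (hC₁ub : ∀ j, K j j ≤ C₁)
    (L S : Finset (Fin n)) :
    ∑ j ∈ S, (f (insert j L) - f L)
      ≥ (1 / (2 * C₁)) * ∑ j ∈ S, (max (μ j - (K *ᵥ ζ L) j) 0) ^ 2 := by
  rw [ge_iff_le, mul_sum]
  refine sum_le_sum fun j _ => ?_
  have hgain := obj_add_sq_max_div_le hpd (hζ L).1 (hζ (insert j L)).2
  have hKjj : 0 < K j j := hpd.diag_pos
  calc 1 / (2 * C₁) * max (μ j - (K *ᵥ ζ L) j) 0 ^ 2
      ≤ max (μ j - (K *ᵥ ζ L) j) 0 ^ 2 / (2 * K j j) := by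
        rw [one_div_mul_eq_div]
        gcongr
        exact hC₁ub j
    _ ≤ f (insert j L) - f L := by
        rw [hf, hf]
        linarith

/-- For disjoint `L, S`:
`∑_{j ∈ S} (f(L∪{j}) - f(L)) ≥ (1/(2 C̃₁)) ∑_{j ∈ S} (max{∇l_j(ζ^L), 0})²`,
where `C̃₁ = max_j K_{jj}`. -/
theorem singleton_gain_lower_bound (n : ℕ) (hn : 1 ≤ n)
    (K : Matrix (Fin n) (Fin n) ℝ) (hsymm : K.IsSymm) (hpd : K.PosDef)
    (μ : Fin n → ℝ)
    (ζ : Finset (Fin n) → Fin n → ℝ)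
    (hζ : ∀ L : Finset (Fin n),
      ζ L ∈ feas L ∧ ∀ w ∈ feas L, obj K μ w ≤ obj K μ (ζ L))
    (f : Finset (Fin n) → ℝ) (hf : ∀ L : Finset (Fin n), f L = obj K μ (ζ L))
    (C₁ : ℝ) (hC₁ub : ∀ j, K j j ≤ C₁) (hC₁mem : ∃ j, C₁ = K j j)
    (L S : Finset (Fin n)) (hdisj : Disjoint L S) :
    ∑ j ∈ S, (f (insert j L) - f L)
      ≥ (1 / (2 * C₁)) * ∑ j ∈ S, (max (μ j - (K *ᵥ ζ L) j) 0) ^ 2 :=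
  singleton_gain_lower_bound_general n K hpd μ ζ hζ f hf C₁ hC₁ub L S
end
end

section
/- For any L ⊆ {1,…,n} and u ∉ L: ‖ζ^{L∪{u}} − ζ^L‖² ≤ (2/c) · (f(L∪{u}) − f(L)). -/
open Finset Matrix

noncomputable section

/-- `‖ζ^{L∪{u}} - ζ^L‖² ≤ (2/c) (f(L∪{u}) - f(L))`. -/
theorem maximizer_diff_bound (n : ℕ) (hn : 1 ≤ n)
    (K : Matrix (Fin n) (Fin n) ℝ) (hsymm : K.IsSymm) (hpd : K.PosDef)
    (μ : Fin n → ℝ)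
    (ζ : Finset (Fin n) → Fin n → ℝ)
    (hζ : ∀ L : Finset (Fin n),
      ζ L ∈ feas L ∧ ∀ w ∈ feas L, obj K μ w ≤ obj K μ (ζ L))
    (f : Finset (Fin n) → ℝ) (hf : ∀ L : Finset (Fin n), f L = obj K μ (ζ L))
    (c : ℝ) (hc : 0 < c)
    (hcK : ∀ x : Fin n → ℝ, c * (∑ j, (x j) ^ 2) ≤ x ⬝ᵥ (K *ᵥ x))
    (L : Finset (Fin n)) (u : Fin n) (hu : u ∉ L) :
    ∑ j, (ζ (insert u L) j - ζ L j) ^ 2 ≤ (2 / c) * (f (insert u L) - f L) := by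
  obtain ⟨⟨hann, haz⟩, _⟩ := hζ L
  obtain ⟨⟨hbnn, hbz⟩, hbmax⟩ := hζ (insert u L)
  set a := ζ L with ha
  set b := ζ (insert u L) with hb
  set d : Fin n → ℝ := a - b with hd
  set G : ℝ := μ ⬝ᵥ d - d ⬝ᵥ (K *ᵥ b) with hGdef
  set Q : ℝ := d ⬝ᵥ (K *ᵥ d) with hQdef
  have hswap : ∀ x y : Fin n → ℝ, x ⬝ᵥ (K *ᵥ y) = y ⬝ᵥ (K *ᵥ x) := by
    intro x y
    rw [Matrix.dotProduct_mulVec, dotProduct_comm, ← Matrix.mulVec_transpose, hsymm.eq]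
  have hexp : ∀ t : ℝ, obj K μ (b + t • d) =
      obj K μ b + t * G - t ^ 2 / 2 * Q := by
    intro t
    simp only [hGdef, hQdef, obj, Matrix.mulVec_add, Matrix.mulVec_smul, dotProduct_add,
      add_dotProduct, dotProduct_smul, smul_dotProduct, smul_eq_mul]
    rw [hswap d b]
    ring
  have hfeas : ∀ t : ℝ, 0 ≤ t → t ≤ 1 → b + t • d ∈ feas (insert u L) := by
    intro t ht0 ht1
    constructor
    · intro j
      have : (b + t • d) j = (1 - t) * b j + t * a j := by
        simp [hd]; ring
      rw [this]
      have h1 : 0 ≤ 1 - t := by linarith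
      have := hann j
      have := hbnn j
      have := mul_nonneg h1 (hbnn j)
      have := mul_nonneg ht0 (hann j)
      linarith
    · intro j hj
      have hja : a j = 0 := haz j (fun h => hj (Finset.mem_insert_of_mem h))
      have hjb : b j = 0 := hbz j hj
      simp [hd, hja, hjb]
  have hGle : ∀ t : ℝ, 0 < t → t ≤ 1 → G ≤ t / 2 * Q := by
    intro t ht0 ht1
    have h := hbmax _ (hfeas t ht0.le ht1)
    rw [hexp t] at h
    nlinarith
  have hG : G ≤ 0 := by
    by_contra hG
    push_neg at hG
    rcases le_or_gt Q 0 with hQ | hQ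
    · have := hGle 1 one_pos le_rfl
      nlinarith
    · have ht1 : (0:ℝ) < min 1 (G / Q) := by positivity
      have := hGle _ ht1 (min_le_left _ _)
      have h2 : min 1 (G / Q) ≤ G / Q := min_le_right _ _
      have h3 : G / Q * Q = G := div_mul_cancel₀ _ hQ.ne'
      nlinarith
  have hdiff : f (insert u L) - f L = Q / 2 - G := by
    rw [hf, hf, ← ha, ← hb]
    have : a = b + (1:ℝ) • d := by simp [hd]
    rw [this, hexp 1]
    ring
  have hQ : c * (∑ j, (d j) ^ 2) ≤ Q := hcK d
  have heq : ∑ j, (b j - a j) ^ 2 = ∑ j, (d j) ^ 2 := by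
    apply Finset.sum_congr rfl
    intro j _
    simp [hd]
    ring
  rw [heq, hdiff]
  rw [div_mul_eq_mul_div, le_div_iff₀ hc]
  nlinarith
end
end

section
/- ProtoGreedy guarantee: let m ≥ 1 with m ≤ n, and let L₀ = ∅ and, for 0 ≤ i < m, L_{i+1} = L_i ∪ {j_i} where j_i ∉ L_i satisfies f(L_i ∪ {j_i}) ≥ f(L_i ∪ {j}) for all j ∉ L_i. Let L* ⊆ {1,…,n} be any set with |L*| ≤ m, and suppose γ > 0 is such that for every L ⊆ L_m and every S disjoint from L with |S| ≤ m, Σ_{j ∈ S}(f(L∪{j}) − f(L)) ≥ γ · (f(L∪S) − f(L)). Then f(L_m) ≥ (1 − e^{−γ}) · f(L*). -/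
open Finset Matrix

noncomputable section

/-- ProtoGreedy guarantee. -/
theorem protogreedy_guarantee (n : ℕ) (hn : 1 ≤ n)
    (K : Matrix (Fin n) (Fin n) ℝ) (hsymm : K.IsSymm) (hpd : K.PosDef)
    (μ : Fin n → ℝ)
    (ζ : Finset (Fin n) → Fin n → ℝ)
    (hζ : ∀ L : Finset (Fin n),
      ζ L ∈ feas L ∧ ∀ w ∈ feas L, obj K μ w ≤ obj K μ (ζ L))
    (f : Finset (Fin n) → ℝ) (hf : ∀ L : Finset (Fin n), f L = obj K μ (ζ L))
    (m : ℕ) (hm : 1 ≤ m) (hmn : m ≤ n)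
    (Lseq : ℕ → Finset (Fin n)) (jseq : ℕ → Fin n)
    (hL0 : Lseq 0 = ∅)
    (hstep : ∀ i < m, jseq i ∉ Lseq i ∧ Lseq (i + 1) = insert (jseq i) (Lseq i) ∧
      ∀ j ∉ Lseq i, f (insert j (Lseq i)) ≤ f (insert (jseq i) (Lseq i)))
    (Lopt : Finset (Fin n)) (hLopt : Lopt.card ≤ m)
    (γ : ℝ) (hγ : 0 < γ)
    (hsub : ∀ L' ⊆ Lseq m, ∀ S : Finset (Fin n), Disjoint L' S → S.card ≤ m →
      ∑ j ∈ S, (f (insert j L') - f L') ≥ γ * (f (L' ∪ S) - f L')) :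
    f (Lseq m) ≥ (1 - Real.exp (-γ)) * f Lopt := by
  have hm0 : (0:ℝ) < (m:ℝ) := by exact_mod_cast hm
  -- monotonicity of f
  have hfeas_mono : ∀ {L L' : Finset (Fin n)}, L ⊆ L' → feas L ⊆ feas L' := by
    intro L L' h w hw
    exact ⟨hw.1, fun j hj => hw.2 j (fun hjL => hj (h hjL))⟩
  have fmono : ∀ {L L' : Finset (Fin n)}, L ⊆ L' → f L ≤ f L' := by
    intro L L' h
    rw [hf, hf]
    exact (hζ L').2 _ (hfeas_mono h (hζ L).1)
  have f0 : f ∅ = 0 := by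
    have h0 : ζ ∅ = fun _ => 0 := funext fun j => (hζ ∅).1.2 j (by simp)
    rw [hf, h0]
    simp [obj, dotProduct]
  have fopt0 : 0 ≤ f Lopt := by
    have := fmono (Finset.empty_subset Lopt)
    linarith [f0 ▸ this]
  have hsucc : ∀ i < m, Lseq i ⊆ Lseq (i+1) := by
    intro i hi
    rw [(hstep i hi).2.1]
    exact Finset.subset_insert _ _
  have hchain : ∀ j ≤ m, ∀ i ≤ j, Lseq i ⊆ Lseq j := by
    intro j hj
    induction j with
    | zero => intro i hi; interval_cases i; exact subset_rfl
    | succ k ih =>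
      intro i hi
      rcases Nat.lt_or_ge i (k+1) with h | h
      · exact (ih (le_of_lt (Nat.lt_of_lt_of_le (Nat.lt_succ_self k) hj)) i
          (Nat.lt_succ_iff.mp h)).trans (hsucc k (Nat.lt_of_lt_of_le (Nat.lt_succ_self k) hj))
      · have : i = k + 1 := le_antisymm hi h
        rw [this]
  have key : ∀ i < m, γ * (f Lopt - f (Lseq i)) ≤ (m:ℝ) * (f (Lseq (i+1)) - f (Lseq i)) := by
    intro i hi
    set L := Lseq i with hLdef
    set S := Lopt \ L with hSdef
    have hLsub : L ⊆ Lseq m := hchain m le_rfl i (le_of_lt hi)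
    have hdisj : Disjoint L S := disjoint_sdiff
    have hScard : S.card ≤ m := le_trans (Finset.card_le_card Finset.sdiff_subset) hLopt
    have h1 := hsub L hLsub S hdisj hScard
    have hinc : 0 ≤ f (Lseq (i+1)) - f L := sub_nonneg.2 (fmono (hsucc i hi))
    have h2 : ∑ j ∈ S, (f (insert j L) - f L) ≤ S.card • (f (Lseq (i+1)) - f L) := by
      apply Finset.sum_le_card_nsmul
      intro j hj
      have hjL : j ∉ L := (Finset.mem_sdiff.mp hj).2
      have := (hstep i hi).2.2 j hjL
      rw [(hstep i hi).2.1]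
      linarith
    have h3 : f Lopt ≤ f (L ∪ S) := by
      apply fmono
      rw [hSdef, Finset.union_sdiff_self_eq_union]
      exact Finset.subset_union_right
    have h4 : (S.card : ℝ) * (f (Lseq (i+1)) - f L) ≤ (m:ℝ) * (f (Lseq (i+1)) - f L) := by
      apply mul_le_mul_of_nonneg_right _ hinc
      exact_mod_cast hScard
    have h5 : γ * (f Lopt - f L) ≤ γ * (f (L ∪ S) - f L) := by
      apply mul_le_mul_of_nonneg_left _ (le_of_lt hγ)
      linarith
    rw [nsmul_eq_mul] at h2
    linarith
  set c : ℝ := max 0 (1 - γ / m) with hcdef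
  have hc0 : 0 ≤ c := le_max_left _ _
  have claim : ∀ i ≤ m, f Lopt - f (Lseq i) ≤ c ^ i * f Lopt := by
    intro i hi
    induction i with
    | zero => rw [hL0, f0]; simp
    | succ k ih =>
      have hk : k < m := hi
      have ihk := ih (le_of_lt hk)
      have hkey := key k hk
      have hstep' : f Lopt - f (Lseq (k+1)) ≤ (1 - γ / m) * (f Lopt - f (Lseq k)) := by
        have h' : γ * (f Lopt - f (Lseq k)) / m ≤ f (Lseq (k+1)) - f (Lseq k) :=
          (div_le_iff₀ hm0).mpr (by linarith)
        have heq : (1 - γ / m) * (f Lopt - f (Lseq k))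
            = (f Lopt - f (Lseq k)) - γ * (f Lopt - f (Lseq k)) / m := by
          field_simp
        rw [heq]
        linarith
      rcases le_or_gt 0 (f Lopt - f (Lseq k)) with hg | hg
      · have h6 : (1 - γ / m) * (f Lopt - f (Lseq k)) ≤ c * (f Lopt - f (Lseq k)) :=
          mul_le_mul_of_nonneg_right (le_max_right _ _) hg
        have h7 : c * (f Lopt - f (Lseq k)) ≤ c * (c ^ k * f Lopt) :=
          mul_le_mul_of_nonneg_left ihk hc0
        calc f Lopt - f (Lseq (k+1)) ≤ (1 - γ / m) * (f Lopt - f (Lseq k)) := hstep'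
          _ ≤ c * (f Lopt - f (Lseq k)) := h6
          _ ≤ c * (c ^ k * f Lopt) := h7
          _ = c ^ (k+1) * f Lopt := by ring
      · have hmono : f (Lseq k) ≤ f (Lseq (k+1)) := fmono (hsucc k hk)
        have : f Lopt - f (Lseq (k+1)) ≤ f Lopt - f (Lseq k) := by linarith
        have hpos : 0 ≤ c ^ (k+1) * f Lopt := mul_nonneg (pow_nonneg hc0 _) fopt0
        linarith
  have hcm : c ^ m ≤ Real.exp (-γ) := by
    have hce : c ≤ Real.exp (-(γ / m)) := by
      apply max_le (Real.exp_nonneg _)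
      have := Real.add_one_le_exp (-(γ / m))
      linarith
    calc c ^ m ≤ Real.exp (-(γ / m)) ^ m := pow_le_pow_left₀ hc0 hce m
      _ = Real.exp ((m:ℝ) * (-(γ / m))) := (Real.exp_nat_mul _ _).symm
      _ = Real.exp (-γ) := by rw [mul_neg, mul_div_cancel₀ γ (ne_of_gt hm0)]
  have hfinal := claim m le_rfl
  have : c ^ m * f Lopt ≤ Real.exp (-γ) * f Lopt :=
    mul_le_mul_of_nonneg_right hcm fopt0
  linarith
end
end

section
/- Let L ⊆ {1,…,n} and j ∉ L, and suppose ζ^{L∪{j}}_j > 0. Writing w = ζ^{L∪{j}}, one has f(L∪{j}) = Σ_{i ∈ L} μ_i w_i − (1/2) Σ_{i, i' ∈ L} K_{i i'} w_i w_{i'} + (1/(2K_{jj})) · (μ_j − Σ_{i ∈ L} K_{j i} w_i)², i.e. the value of f(L∪{j}) equals the objective l_j of the reformulated constrained problem of Corollary 4.6 evaluated at the restriction of ζ^{L∪{j}} to the coordinates in L. -/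
/-!
Since `ζ^{L∪{j}}_j > 0`, moving along `e_j` keeps `w = ζ^{L∪{j}}` feasible in both directions,
so `w` is stationary there: `μ_j = (K w)_j`. Write `w = v + w_j e_j` with `v` supported on `L`.
Along `e_j` the objective is the concave parabola `t ↦ l(v) + t (μ_j - (K v)_j) - t² K_jj / 2`,
and stationarity says that `w_j` is its vertex, where it takes the value
`l(v) + (μ_j - (K v)_j)² / (2 K_jj)`.
-/

open Finset Matrix

noncomputable section

section Support

variable {ι R : Type*} [Fintype ι] [CommSemiring R] {L : Finset ι} {v : ι → R}

theorem dotProduct_eq_sum_of_support (u : ι → R) (hv : ∀ i ∉ L, v i = 0) :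
    u ⬝ᵥ v = ∑ i ∈ L, u i * v i :=
  (Finset.sum_subset (Finset.subset_univ L) fun i _ hi => by rw [hv i hi, mul_zero]).symm

theorem dotProduct_mulVec_eq_sum_of_support (K : Matrix ι ι R) (hv : ∀ i ∉ L, v i = 0) :
    v ⬝ᵥ (K *ᵥ v) = ∑ i ∈ L, ∑ i' ∈ L, K i i' * v i * v i' := by
  rw [dotProduct_comm, dotProduct_eq_sum_of_support _ hv]
  refine Finset.sum_congr rfl fun i _ => ?_
  rw [mulVec, dotProduct_eq_sum_of_support _ hv, Finset.sum_mul]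
  exact Finset.sum_congr rfl fun i' _ => by ring

end Support

theorem Matrix.IsSymm.dotProduct_mulVec_comm {ι R : Type*} [Fintype ι] [CommSemiring R]
    {K : Matrix ι ι R} (hK : K.IsSymm) (u v : ι → R) : u ⬝ᵥ (K *ᵥ v) = v ⬝ᵥ (K *ᵥ u) := by
  rw [dotProduct_mulVec, ← vecMul_transpose, hK.eq, dotProduct_comm]

theorem add_single_mem_feas {n : ℕ} {I : Finset (Fin n)} {w : Fin n → ℝ} (hw : w ∈ feas I)
    {j : Fin n} (hj : j ∈ I) {t : ℝ} (ht : 0 ≤ w j + t) : w + Pi.single j t ∈ feas I := by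
  refine ⟨fun i => ?_, fun i hi => ?_⟩
  · by_cases hij : i = j
    · subst hij
      simpa using ht
    · simpa [Pi.single_eq_of_ne hij] using hw.1 i
  · have hij : i ≠ j := fun h => hi (h ▸ hj)
    simp [Pi.single_eq_of_ne hij, hw.2 i hi]

namespace obj

variable {n : ℕ} {K : Matrix (Fin n) (Fin n) ℝ} {μ : Fin n → ℝ}

theorem eq_sum_of_support {v : Fin n → ℝ} {L : Finset (Fin n)} (hv : ∀ i ∉ L, v i = 0) :
    obj K μ v = ∑ i ∈ L, μ i * v i - (1 / 2) * ∑ i ∈ L, ∑ i' ∈ L, K i i' * v i * v i' := by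
  rw [obj, dotProduct_eq_sum_of_support _ hv, dotProduct_mulVec_eq_sum_of_support _ hv]

theorem add_single (hK : K.IsSymm) (w : Fin n → ℝ) (j : Fin n) (t : ℝ) :
    obj K μ (w + Pi.single j t) = obj K μ w + t * (μ j - (K *ᵥ w) j) - t ^ 2 * K j j / 2 := by
  simp only [obj, mulVec_add, dotProduct_add, add_dotProduct]
  rw [hK.dotProduct_mulVec_comm w (Pi.single j t)]
  simp only [dotProduct_single, single_dotProduct, mulVec_single, Pi.smul_apply, col_apply,
    op_smul_eq_mul]
  ring

theorem add_single_of_stationary (hK : K.IsSymm) {j : Fin n} (hKjj : K j j ≠ 0)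
    (v : Fin n → ℝ) (s : ℝ) (hstat : μ j = (K *ᵥ (v + Pi.single j s)) j) :
    obj K μ (v + Pi.single j s) = obj K μ v + 1 / (2 * K j j) * (μ j - (K *ᵥ v) j) ^ 2 := by
  have hs : μ j - (K *ᵥ v) j = K j j * s := by
    simp only [hstat, mulVec_add, mulVec_single, Pi.add_apply, Pi.smul_apply, col_apply,
      op_smul_eq_mul]
    ring
  have hsq : 1 / (2 * K j j) * (K j j * s) ^ 2 = s ^ 2 * K j j / 2 := by
    rw [one_div_mul_eq_div, div_eq_iff (mul_ne_zero two_ne_zero hKjj)]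
    ring
  rw [add_single hK, hs, hsq]
  ring

theorem stationary_of_isMaxOn (hK : K.IsSymm) {I : Finset (Fin n)} {w : Fin n → ℝ}
    (hmax : IsMaxOn (obj K μ) (feas I) w) (hw : w ∈ feas I) {j : Fin n} (hj : j ∈ I)
    (hpos : 0 < w j) : μ j = (K *ᵥ w) j := by
  have hloc : IsLocalMax (fun t => obj K μ (w + Pi.single j t)) 0 := by
    filter_upwards [Ioi_mem_nhds (neg_lt_zero.mpr hpos)] with t ht
    simpa using hmax (add_single_mem_feas hw hj (by linarith [ht.out]))
  have hderiv : HasDerivAt (fun t => obj K μ (w + Pi.single j t)) (μ j - (K *ᵥ w) j) 0 := by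
    simp_rw [add_single hK]
    exact ((((hasDerivAt_id' (0 : ℝ)).mul_const (μ j - (K *ᵥ w) j)).const_add
      (obj K μ w)).sub (((hasDerivAt_pow 2 (0 : ℝ)).mul_const (K j j)).div_const 2)).congr_deriv
      (by simp)
  exact sub_eq_zero.mp (hloc.hasDerivAt_eq_zero hderiv)

end obj

theorem f_insert_reformulation_general (n : ℕ)
    (K : Matrix (Fin n) (Fin n) ℝ) (hpd : K.PosDef)
    (μ : Fin n → ℝ)
    (ζ : Finset (Fin n) → Fin n → ℝ)
    (hζ : ∀ L : Finset (Fin n),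
      ζ L ∈ feas L ∧ ∀ w ∈ feas L, obj K μ w ≤ obj K μ (ζ L))
    (f : Finset (Fin n) → ℝ) (hf : ∀ L : Finset (Fin n), f L = obj K μ (ζ L))
    (L : Finset (Fin n)) (j : Fin n) (hj : j ∉ L)
    (hpos : 0 < ζ (insert j L) j) :
    f (insert j L) =
      (∑ i ∈ L, μ i * ζ (insert j L) i)
        - (1 / 2) * ∑ i ∈ L, ∑ i' ∈ L, K i i' * ζ (insert j L) i * ζ (insert j L) i'
        + (1 / (2 * K j j)) * (μ j - ∑ i ∈ L, K j i * ζ (insert j L) i) ^ 2 := by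
  have hK : K.IsSymm := isHermitian_iff_isSymm.mp hpd.isHermitian
  obtain ⟨hw, hmax⟩ := hζ (insert j L)
  set w := ζ (insert j L)
  set v := w - Pi.single j (w j)
  have hw_split : w = v + Pi.single j (w j) := (sub_add_cancel _ _).symm
  have hv_eq : ∀ i ∈ L, v i = w i := fun i hi => by
    simp [v, Pi.single_eq_of_ne (ne_of_mem_of_not_mem hi hj)]
  have hv_supp : ∀ i ∉ L, v i = 0 := by
    intro i hi
    by_cases hij : i = j
    · simp [v, hij]
    · simp [v, hij, hw.2 i (by simp [hij, hi])]
  have hstat := obj.stationary_of_isMaxOn hK hmax hw (mem_insert_self j L) hpos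
  rw [hw_split] at hstat
  calc f (insert j L) = obj K μ (v + Pi.single j (w j)) := by rw [hf, ← hw_split]
    _ = obj K μ v + 1 / (2 * K j j) * (μ j - (K *ᵥ v) j) ^ 2 :=
      obj.add_single_of_stationary hK hpd.diag_pos.ne' v _ hstat
    _ = _ := by
      rw [obj.eq_sum_of_support hv_supp, mulVec, dotProduct_eq_sum_of_support _ hv_supp]
      simp +contextual only [hv_eq]

/-- Value of `f(L∪{j})` as the reformulated objective `l_j` of Corollary 4.6 evaluated at
the restriction of `ζ^{L∪{j}}` to the coordinates in `L`. -/
theorem f_insert_reformulation (n : ℕ) (hn : 1 ≤ n)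
    (K : Matrix (Fin n) (Fin n) ℝ) (hsymm : K.IsSymm) (hpd : K.PosDef)
    (μ : Fin n → ℝ)
    (ζ : Finset (Fin n) → Fin n → ℝ)
    (hζ : ∀ L : Finset (Fin n),
      ζ L ∈ feas L ∧ ∀ w ∈ feas L, obj K μ w ≤ obj K μ (ζ L))
    (f : Finset (Fin n) → ℝ) (hf : ∀ L : Finset (Fin n), f L = obj K μ (ζ L))
    (L : Finset (Fin n)) (j : Fin n) (hj : j ∉ L)
    (hpos : 0 < ζ (insert j L) j) :
    f (insert j L) =
      (∑ i ∈ L, μ i * ζ (insert j L) i)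
        - (1 / 2) * ∑ i ∈ L, ∑ i' ∈ L, K i i' * ζ (insert j L) i * ζ (insert j L) i'
        + (1 / (2 * K j j)) * (μ j - ∑ i ∈ L, K j i * ζ (insert j L) i) ^ 2 :=
  f_insert_reformulation_general n K hpd μ ζ hζ f hf L j hj hpos
end
end

section
/- Tight per-coordinate lower bound (Corollary 4.6): for any L ⊆ {1,…,n} and j ∉ L, f(L∪{j}) ≥ f(L) + (1/(2K_{jj})) · (max{(μ − Kζ^L)_j, 0})². Consequently, if K_{jj} = 1 for all j, then an index j ∉ L maximizing the gradient coordinate (μ − Kζ^L)_j over j ∉ L (the ProtoDash selection) also maximizes this lower bound f(L) + (1/2)(max{(μ − Kζ^L)_j, 0})² on f(L∪{j}) over j ∉ L. -/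
open Finset Matrix

noncomputable section

/-!
Adding `t ≥ 0` to the `j`-th coordinate of `ζ^L` gives a point of `Ω_{L ∪ {j}}` and changes `l`
by `t g - K_jj t² / 2`, where `g = (μ - K ζ^L)_j`; at `t = max(g, 0) / K_jj` this gain is
`max(g, 0)² / (2 K_jj)`. The selection statement is the monotonicity of `x ↦ max(x, 0)²`.
-/

lemma obj_add_single {n : ℕ} {K : Matrix (Fin n) (Fin n) ℝ} (hK : K.IsSymm)
    (μ w : Fin n → ℝ) (j : Fin n) (t : ℝ) :
    obj K μ (w + Pi.single j t) =
      obj K μ w + (t * (μ j - (K *ᵥ w) j) - 1 / 2 * t ^ 2 * K j j) := by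
  have hcross : w ⬝ᵥ (K *ᵥ Pi.single j t) = (K *ᵥ w) j * t := by
    rw [dotProduct_mulVec, ← mulVec_transpose, hK.eq, dotProduct_single]
  have hdiag : (K *ᵥ Pi.single j t) j = K j j * t := by
    simp [mulVec_single]
  simp only [obj, mulVec_add, dotProduct_add, add_dotProduct, single_dotProduct, dotProduct_single,
    hcross, hdiag]
  ring

/-- For `a ≤ 0` the left side is `≤ 0` (note `1 / 0 = 0`), so `t = 0` works. -/
lemma exists_nonneg_quadratic_ge (a g : ℝ) :
    ∃ t, 0 ≤ t ∧ 1 / (2 * a) * max g 0 ^ 2 ≤ t * g - 1 / 2 * t ^ 2 * a := by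
  rcases lt_or_ge 0 a with ha | ha
  · refine ⟨max g 0 / a, by positivity, le_of_eq ?_⟩
    rcases le_total g 0 with hg | hg
    · simp [max_eq_right hg]
    · rw [max_eq_left hg]
      field_simp
      ring
  · refine ⟨0, le_rfl, ?_⟩
    have : 1 / (2 * a) ≤ 0 := one_div_nonpos.mpr (by linarith)
    simpa using mul_nonpos_of_nonpos_of_nonneg this (sq_nonneg (max g 0))

lemma add_single_mem_feas_insert {n : ℕ} {L : Finset (Fin n)} {w : Fin n → ℝ}
    (hw : w ∈ feas L) (j : Fin n) {t : ℝ} (ht : 0 ≤ t) :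
    w + Pi.single j t ∈ feas (insert j L) := by
  refine ⟨fun i => add_nonneg (hw.1 i) ?_, fun i hi => ?_⟩
  · rcases eq_or_ne i j with rfl | hij
    · simpa using ht
    · simp [hij]
  · rw [mem_insert, not_or] at hi
    simp [hi.1, hw.2 i hi.2]

theorem per_coordinate_lower_bound_general (n : ℕ)
    (K : Matrix (Fin n) (Fin n) ℝ) (hsymm : K.IsSymm)
    (μ : Fin n → ℝ)
    (ζ : Finset (Fin n) → Fin n → ℝ)
    (hζ : ∀ L : Finset (Fin n),
      ζ L ∈ feas L ∧ ∀ w ∈ feas L, obj K μ w ≤ obj K μ (ζ L))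
    (f : Finset (Fin n) → ℝ) (hf : ∀ L : Finset (Fin n), f L = obj K μ (ζ L))
    (L : Finset (Fin n)) :
    (∀ j ∉ L,
      f (insert j L) ≥ f L + (1 / (2 * K j j)) * (max (μ j - (K *ᵥ ζ L) j) 0) ^ 2) ∧
    ((∀ j, K j j = 1) → ∀ v ∉ L,
      (∀ j ∉ L, μ j - (K *ᵥ ζ L) j ≤ μ v - (K *ᵥ ζ L) v) →
      ∀ j ∉ L,
        f L + (1 / 2) * (max (μ j - (K *ᵥ ζ L) j) 0) ^ 2
          ≤ f L + (1 / 2) * (max (μ v - (K *ᵥ ζ L) v) 0) ^ 2) := by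
  refine ⟨fun j _ => ?_, fun _ v _ hmax j hj => ?_⟩
  · obtain ⟨t, ht, hquad⟩ := exists_nonneg_quadratic_ge (K j j) (μ j - (K *ᵥ ζ L) j)
    calc f L + 1 / (2 * K j j) * max (μ j - (K *ᵥ ζ L) j) 0 ^ 2
        ≤ obj K μ (ζ L + Pi.single j t) := by
          rw [hf, obj_add_single hsymm]
          exact (add_le_add_iff_left _).mpr hquad
      _ ≤ f (insert j L) := by
          rw [hf]
          exact (hζ _).2 _ (add_single_mem_feas_insert (hζ L).1 j ht)
  · gcongr f L + 1 / 2 * ?_ ^ 2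
    exact max_le_max_right 0 (hmax j hj)

/-- Corollary 4.6 (tight per-coordinate lower bound, and ProtoDash maximizes it when the
kernel is normalized). -/
theorem per_coordinate_lower_bound (n : ℕ) (hn : 1 ≤ n)
    (K : Matrix (Fin n) (Fin n) ℝ) (hsymm : K.IsSymm) (hpd : K.PosDef)
    (μ : Fin n → ℝ)
    (ζ : Finset (Fin n) → Fin n → ℝ)
    (hζ : ∀ L : Finset (Fin n),
      ζ L ∈ feas L ∧ ∀ w ∈ feas L, obj K μ w ≤ obj K μ (ζ L))
    (f : Finset (Fin n) → ℝ) (hf : ∀ L : Finset (Fin n), f L = obj K μ (ζ L))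
    (L : Finset (Fin n)) :
    (∀ j ∉ L,
      f (insert j L) ≥ f L + (1 / (2 * K j j)) * (max (μ j - (K *ᵥ ζ L) j) 0) ^ 2) ∧
    ((∀ j, K j j = 1) → ∀ v ∉ L,
      (∀ j ∉ L, μ j - (K *ᵥ ζ L) j ≤ μ v - (K *ᵥ ζ L) v) →
      ∀ j ∉ L,
        f L + (1 / 2) * (max (μ j - (K *ᵥ ζ L) j) 0) ^ 2
          ≤ f L + (1 / 2) * (max (μ v - (K *ᵥ ζ L) v) 0) ^ 2) :=
  per_coordinate_lower_bound_general n K hsymm μ ζ hζ f hf L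
end
end
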